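/- Field inversion in invertible subtyping: if Γ ⊢## {a : S} <: {a : T}, then Γ ⊢## S <: T. -/
import Mathlib


namespace CDOT
/-! # A deep embedding of the cDOT calculus -/

set_option maxHeartbeats 1000000

/-- Paths: variables and chains of field selections. -/
inductive Path : Type
  | var : ℕ → Path
  | sel : Path → ℕ → Path
deriving DecidableEq

/-- cDOT types. -/
inductive Ty : Type
  | top : Ty
  | bot : Ty
  | fld : ℕ → Ty → Ty            -- {a : T}
  | typ : ℕ → Ty → Ty → Ty       -- {A : S..T}
  | and : Ty → Ty → Ty           -- S ∧ T
  | mu : ℕ → Ty → Ty             -- μ(x : T)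
  | all : ℕ → Ty → Ty → Ty       -- ∀(x : S) T
  | psel : Path → ℕ → Ty         -- p.A
  | sngl : Path → Ty             -- p.type
deriving DecidableEq

mutual
/-- cDOT terms (in A-normal form). -/
inductive Trm : Type
  | path : Path → Trm
  | val : Val → Trm
  | app : Path → Path → Trm
  | lett : ℕ → Trm → Trm → Trm
  /-- `cas p q A y t₁ t₂` is `case p of q.A ⇒ y.t₁ else t₂`. -/
  | cas : Path → Path → ℕ → ℕ → Trm → Trm → Trm
/-- cDOT values: tagged objects ν(x:T)[q.A]d and lambdas. -/
inductive Val : Type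
  | obj : Path → ℕ → ℕ → Ty → Dfs → Val     -- ν(x : T)[q.A] d
  | lam : ℕ → Ty → Trm → Val
/-- Object definitions: fields (initialized with stable terms, i.e. paths or
values) and type member definitions. -/
inductive Dfs : Type
  | fldP : ℕ → Path → Dfs
  | fldV : ℕ → Val → Dfs
  | typ : ℕ → Ty → Dfs
  | and : Dfs → Dfs → Dfs
end

/-- Substituting a path for a variable in a path. -/
def Path.subst (x : ℕ) (p : Path) : Path → Path
  | .var y => if y = x then p else .var y
  | .sel q a => .sel (Path.subst x p q) a

/-- Substituting a path for a variable in a type. -/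
def Ty.subst (x : ℕ) (p : Path) : Ty → Ty
  | .top => .top
  | .bot => .bot
  | .fld a T => .fld a (T.subst x p)
  | .typ A S T => .typ A (S.subst x p) (T.subst x p)
  | .and S T => .and (S.subst x p) (T.subst x p)
  | .mu y T => .mu y (if y = x then T else T.subst x p)
  | .all y S T => .all y (S.subst x p) (if y = x then T else T.subst x p)
  | .psel q A => .psel (Path.subst x p q) A
  | .sngl q => .sngl (Path.subst x p q)

mutual
/-- Substituting a path for a variable in a term. -/
def Trm.subst (x : ℕ) (p : Path) : Trm → Trm
  | .path q => .path (Path.subst x p q)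
  | .val v => .val (v.subst x p)
  | .app q r => .app (Path.subst x p q) (Path.subst x p r)
  | .lett y t u => .lett y (t.subst x p) (if y = x then u else u.subst x p)
  | .cas q r A y t u =>
      .cas (Path.subst x p q) (Path.subst x p r) A y (if y = x then t else t.subst x p) (u.subst x p)
def Val.subst (x : ℕ) (p : Path) : Val → Val
  | .obj q A y T d =>
      .obj (Path.subst x p q) A y (if y = x then T else T.subst x p)
        (if y = x then d else d.subst x p)
  | .lam y T t => .lam y (T.subst x p) (if y = x then t else t.subst x p)
def Dfs.subst (x : ℕ) (p : Path) : Dfs → Dfs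
  | .fldP a q => .fldP a (Path.subst x p q)
  | .fldV a v => .fldV a (v.subst x p)
  | .typ A T => .typ A (T.subst x p)
  | .and d e => .and (d.subst x p) (e.subst x p)
end

/-- Replacing the path prefix `p` by `q` in a path. -/
def Path.repl (p q : Path) : Path → Path
  | .var y => if Path.var y = p then q else .var y
  | .sel r a => if Path.sel r a = p then q else .sel (Path.repl p q r) a

/-- Replacing the path prefix `p` by `q` everywhere in a type. -/
def Ty.repl (p q : Path) : Ty → Ty
  | .top => .top
  | .bot => .bot
  | .fld a T => .fld a (T.repl p q)
  | .typ A S T => .typ A (S.repl p q) (T.repl p q)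
  | .and S T => .and (S.repl p q) (T.repl p q)
  | .mu y T => .mu y (T.repl p q)
  | .all y S T => .all y (S.repl p q) (T.repl p q)
  | .psel r A => .psel (Path.repl p q r) A
  | .sngl r => .sngl (Path.repl p q r)

/-- Free variables of a path. -/
def Path.fv : Path → Finset ℕ
  | .var x => {x}
  | .sel p _ => p.fv

/-- Free variables of a type. -/
def Ty.fv : Ty → Finset ℕ
  | .top => ∅
  | .bot => ∅
  | .fld _ T => T.fv
  | .typ _ S T => S.fv ∪ T.fv
  | .and S T => S.fv ∪ T.fv
  | .mu x T => T.fv.erase x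
  | .all x S T => S.fv ∪ T.fv.erase x
  | .psel p _ => p.fv
  | .sngl p => p.fv

/-- The paths occurring in a type. -/
def Ty.paths : Ty → List Path
  | .top => []
  | .bot => []
  | .fld _ T => T.paths
  | .typ _ S T => S.paths ++ T.paths
  | .and S T => S.paths ++ T.paths
  | .mu _ T => T.paths
  | .all _ S T => S.paths ++ T.paths
  | .psel p _ => [p]
  | .sngl p => [p]

/-- Labels (term members and type members) bound by a definition. -/
def Dfs.dom : Dfs → Finset (ℕ ⊕ ℕ)
  | .fldP a _ => {Sum.inl a}
  | .fldV a _ => {Sum.inl a}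
  | .typ A _ => {Sum.inr A}
  | .and d e => d.dom ∪ e.dom

/-- Tight bounds: all type members occurring in the type have equal bounds. -/
def Ty.tight : Ty → Prop
  | .typ _ S T => S = T
  | .mu _ T => T.tight
  | .fld _ T => T.tight
  | .and S T => S.tight ∧ T.tight
  | _ => True

/-- Association-list lookup. -/
def assocFind {α : Type} : List (ℕ × α) → ℕ → Option α
  | [], _ => none
  | (y, v) :: l, x => if x = y then some v else assocFind l x

/-- Typing environments. -/
abbrev Env : Type := List (ℕ × Ty)

/-- Unique membership with label set: `UniqMemL T U L` extracts the component
`U` from the intersection type `T`, where `L` records the labels seen so far,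
which must be pairwise distinct. -/
inductive UniqMemL : Ty → Ty → Finset (ℕ ⊕ ℕ) → Prop
  | typ : UniqMemL (.typ A S T) (.typ A S T) {Sum.inr A}
  | fld : UniqMemL (.fld a T) (.fld a T) {Sum.inl a}
  | mu : UniqMemL (.mu x T) (.mu x T) ∅
  | andL : UniqMemL U₁ T₁ L₁ → UniqMemL U₂ T₂ L₂ → L₁ ∩ L₂ = ∅ →
      UniqMemL (.and U₁ U₂) T₁ (L₁ ∪ L₂)
  | andR : UniqMemL U₁ T₁ L₁ → UniqMemL U₂ T₂ L₂ → L₁ ∩ L₂ = ∅ →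
      UniqMemL (.and U₁ U₂) T₂ (L₁ ∪ L₂)

/-- Unique membership `T ↘ U`. -/
def UniqMem (T U : Ty) : Prop := ∃ L, UniqMemL T U L

mutual
/-- cDOT term typing `Γ ⊢ t : T`. -/
inductive HasTy : Env → Trm → Ty → Prop
  | var : assocFind Γ x = some T → HasTy Γ (.path (.var x)) T
  | allI : HasTy ((x, T) :: Γ) t U → x ∉ T.fv →
      HasTy Γ (.val (.lam x T t)) (.all x T U)
  | allE : HasTy Γ (.path p) (.all z S T) → HasTy Γ (.path q) S →
      HasTy Γ (.app p q) (T.subst z q)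
  | objI : DefTy ((x, T) :: Γ) (.var x) d T →
      HasTy ((x, T) :: Γ) (.path (.var x)) (.psel q A) →
      HasTy Γ (.val (.obj q A x T d)) (.mu x T)
  | fldE : HasTy Γ (.path p) (.fld a T) → HasTy Γ (.path (.sel p a)) T
  | fldI : HasTy Γ (.path (.sel p a)) T → HasTy Γ (.path p) (.fld a T)
  | lett : HasTy Γ t T → HasTy ((x, T) :: Γ) u U → x ∉ U.fv →
      HasTy Γ (.lett x t u) U
  | cas : HasTy Γ (.path p) S → HasTy Γ (.path q) S' →
      HasTy ((y, Ty.and (.sngl p) (.psel q A)) :: Γ) t₁ U →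
      HasTy Γ t₂ U → y ∉ U.fv →
      HasTy Γ (.cas p q A y t₁ t₂) U
  | snglTrans : HasTy Γ (.path p) (.sngl q) → HasTy Γ (.path q) T →
      HasTy Γ (.path p) T
  | snglSelf : HasTy Γ (.path p) T → HasTy Γ (.path p) (.sngl p)
  | snglE : HasTy Γ (.path p) (.sngl q) → HasTy Γ (.path (.sel q a)) T →
      HasTy Γ (.path (.sel p a)) (.sngl (.sel q a))
  | recI : HasTy Γ (.path p) (T.subst x p) → HasTy Γ (.path p) (.mu x T)
  | recE : HasTy Γ (.path p) (.mu x T) → HasTy Γ (.path p) (T.subst x p)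
  | andI : HasTy Γ (.path p) T → HasTy Γ (.path p) U →
      HasTy Γ (.path p) (.and T U)
  | sub : HasTy Γ t T → Sub Γ T U → HasTy Γ t U

/-- cDOT definition typing (with the path prefix recording the identity of the
object being typed). -/
inductive DefTy : Env → Path → Dfs → Ty → Prop
  | typ : DefTy Γ p (.typ A T) (.typ A T T)
  | allD : HasTy Γ (.val (.lam x T t)) (.all x U V) →
      DefTy Γ p (.fldV a (.lam x T t)) (.fld a (.all x U V))
  | newD : DefTy Γ (.sel p a) (d.subst y (.sel p a)) (T.subst y (.sel p a)) →
      HasTy Γ (.path (.sel p a)) (Ty.psel (Path.subst y (.sel p a) q) A) →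
      T.tight →
      DefTy Γ p (.fldV a (.obj q A y T d)) (.fld a (.mu y T))
  | pathD : HasTy Γ (.path q) U → DefTy Γ p (.fldP a q) (.fld a (.sngl q))
  | andD : DefTy Γ p d₁ T₁ → DefTy Γ p d₂ T₂ → d₁.dom ∩ d₂.dom = ∅ →
      DefTy Γ p (.and d₁ d₂) (.and T₁ T₂)

/-- cDOT subtyping `Γ ⊢ S <: T`, including the subtyping inversion rules. -/
inductive Sub : Env → Ty → Ty → Prop
  | top : Sub Γ T .top
  | bot : Sub Γ .bot T
  | refl : Sub Γ T T
  | trans : Sub Γ S T → Sub Γ T U → Sub Γ S U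
  | and1 : Sub Γ (.and T U) T
  | and2 : Sub Γ (.and T U) U
  | andI : Sub Γ S T → Sub Γ S U → Sub Γ S (.and T U)
  | fld : Sub Γ T U → Sub Γ (.fld a T) (.fld a U)
  | fldInv : UniqMem U (.fld a T₁) → Sub Γ U (.fld a T₂) → Sub Γ T₁ T₂
  | typ : Sub Γ S₂ S₁ → Sub Γ T₁ T₂ → Sub Γ (.typ A S₁ T₁) (.typ A S₂ T₂)
  | typInv1 : UniqMem U (.typ A S₁ T₁) → Sub Γ U (.typ A S₂ T₂) → Sub Γ S₂ S₁
  | typInv2 : UniqMem U (.typ A S₁ T₁) → Sub Γ U (.typ A S₂ T₂) → Sub Γ T₁ T₂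
  | selLo : HasTy Γ (.path p) (.typ A S T) → Sub Γ S (.psel p A)
  | selHi : HasTy Γ (.path p) (.typ A S T) → Sub Γ (.psel p A) T
  | snglPQ : HasTy Γ (.path p) (.sngl q) → HasTy Γ (.path q) U →
      Sub Γ T (T.repl p q)
  | snglQP : HasTy Γ (.path p) (.sngl q) → HasTy Γ (.path q) U →
      Sub Γ T (T.repl q p)
  | allST : Sub Γ S₂ S₁ → Sub ((x, S₂) :: Γ) T₁ T₂ →
      Sub Γ (.all x S₁ T₁) (.all x S₂ T₂)
end

/-- Mutual subtyping `Γ ⊢ A =:= B`. -/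
def TyEq (Γ : Env) (A B : Ty) : Prop := Sub Γ A B ∧ Sub Γ B A
end CDOT
namespace CDOT

/-- Precise typing, level I (`Γ ⊢! p : T`): typing of paths directly followed
from the environment by field selection, recursion elimination and
intersection elimination. -/
inductive Prec1 : Env → Path → Ty → Prop
  | var : assocFind Γ x = some T → Prec1 Γ (.var x) T
  | fldE : Prec1 Γ p (.fld a T) → Prec1 Γ (.sel p a) T
  | recE : Prec1 Γ p (.mu x T) → Prec1 Γ p (T.subst x p)
  | and1 : Prec1 Γ p (.and T U) → Prec1 Γ p T
  | and2 : Prec1 Γ p (.and T U) → Prec1 Γ p U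

/-- Precise typing, level II (`Γ ⊢!! p : T`): level I closed under chains of
singleton-type aliasing. -/
inductive Prec2 : Env → Path → Ty → Prop
  | p1 : Prec1 Γ p T → Prec2 Γ p T
  | sngl : Prec2 Γ p (.sngl q) → Prec2 Γ q T → Prec2 Γ p T

/-- Precise typing, level III (`Γ ⊢!!! p : T`): level II closed under
intersection introduction. -/
inductive Prec3 : Env → Path → Ty → Prop
  | p2 : Prec2 Γ p T → Prec3 Γ p T
  | andI : Prec3 Γ p T → Prec3 Γ p U → Prec3 Γ p (.and T U)

/-- Tight subtyping `Γ ⊢# S <: T`: the selection and singleton-replacement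
rules require precise typing with tight (equal) type-member bounds. -/
inductive TSub : Env → Ty → Ty → Prop
  | top : TSub Γ T .top
  | bot : TSub Γ .bot T
  | refl : TSub Γ T T
  | trans : TSub Γ S T → TSub Γ T U → TSub Γ S U
  | and1 : TSub Γ (.and T U) T
  | and2 : TSub Γ (.and T U) U
  | andI : TSub Γ S T → TSub Γ S U → TSub Γ S (.and T U)
  | fld : TSub Γ T U → TSub Γ (.fld a T) (.fld a U)
  | typ : TSub Γ S₂ S₁ → TSub Γ T₁ T₂ →
      TSub Γ (.typ A S₁ T₁) (.typ A S₂ T₂)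
  | selLo : Prec3 Γ p (.typ A S S) → TSub Γ S (.psel p A)
  | selHi : Prec3 Γ p (.typ A S S) → TSub Γ (.psel p A) S
  | snglPQ : Prec3 Γ p (.sngl q) → Prec2 Γ q U → TSub Γ T (T.repl p q)
  | snglQP : Prec3 Γ p (.sngl q) → Prec2 Γ q U → TSub Γ T (T.repl q p)
  | allST : TSub Γ S₂ S₁ → Sub ((x, S₂) :: Γ) T₁ T₂ →
      TSub Γ (.all x S₁ T₁) (.all x S₂ T₂)

end CDOT
namespace CDOT

/-- Invertible subtyping `Γ ⊢## S <: T`: tight subtyping with the transitivity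
rule removed and inlined into the type-member, selection, and
singleton-path-replacement rules. -/
inductive ISub : Env → Ty → Ty → Prop
  | top : ISub Γ T .top
  | bot : ISub Γ .bot T
  | refl : ISub Γ T T
  | and1 : ISub Γ T S → ISub Γ (.and T U) S
  | and2 : ISub Γ U S → ISub Γ (.and T U) S
  | andI : ISub Γ S T → ISub Γ S U → ISub Γ S (.and T U)
  | fld : ISub Γ T U → ISub Γ (.fld a T) (.fld a U)
  | typ : TSub Γ S₂ S₁ → TSub Γ T₁ T₂ →
      ISub Γ (.typ A S₁ T₁) (.typ A S₂ T₂)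
  | selLo : Prec3 Γ p (.typ A T T) → ISub Γ S T → ISub Γ S (.psel p A)
  | selHi : Prec3 Γ p (.typ A T T) → ISub Γ T U → ISub Γ (.psel p A) U
  | snglPQ2 : Prec3 Γ p (.sngl q) → Prec2 Γ q V → ISub Γ S T →
      ISub Γ S (T.repl p q)
  | snglPQ1 : Prec3 Γ p (.sngl q) → Prec2 Γ q V → ISub Γ S T →
      ISub Γ (S.repl p q) T
  | snglQP2 : Prec3 Γ p (.sngl q) → Prec2 Γ q V → ISub Γ S T →
      ISub Γ S (T.repl q p)
  | snglQP1 : Prec3 Γ p (.sngl q) → Prec2 Γ q V → ISub Γ S T →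
      ISub Γ (S.repl q p) T
  | allST : TSub Γ S₂ S₁ → Sub ((x, S₂) :: Γ) T₁ T₂ →
      ISub Γ (.all x S₁ T₁) (.all x S₂ T₂)

end CDOT

namespace CDOT

theorem Ty.repl_eq_fld {p q : Path} {X : Ty} {a : ℕ} {T : Ty}
    (h : Ty.repl p q X = Ty.fld a T) : ∃ T₀, X = Ty.fld a T₀ ∧ T = Ty.repl p q T₀ := by
  cases X <;> simp_all [Ty.repl]

theorem ISub.fld_inv : ∀ {Γ X Y}, ISub Γ X Y → ∀ {a S T}, X = .fld a S → Y = .fld a T →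
    ISub Γ S T := by
  intro Γ X Y h
  induction h with
  | top => intro a S T hX hY; cases hY
  | bot => intro a S T hX hY; cases hX
  | refl => intro a S T hX hY; subst hX; cases hY; exact .refl
  | and1 _ _ => intro a S T hX hY; cases hX
  | and2 _ _ => intro a S T hX hY; cases hX
  | andI _ _ _ _ => intro a S T hX hY; cases hY
  | fld h ih => intro a S T hX hY; cases hX; cases hY; exact h
  | typ _ _ => intro a S T hX hY; cases hX
  | selLo _ _ _ => intro a S T hX hY; cases hY
  | selHi _ _ _ => intro a S T hX hY; cases hX
  | snglPQ2 hp hq h ih =>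
    intro a S T hX hY
    subst hX
    obtain ⟨T0, rfl, rfl⟩ := Ty.repl_eq_fld hY
    exact .snglPQ2 hp hq (ih rfl rfl)
  | snglPQ1 hp hq h ih =>
    intro a S T hX hY
    subst hY
    obtain ⟨S0, rfl, rfl⟩ := Ty.repl_eq_fld hX
    exact .snglPQ1 hp hq (ih rfl rfl)
  | snglQP2 hp hq h ih =>
    intro a S T hX hY
    subst hX
    obtain ⟨T0, rfl, rfl⟩ := Ty.repl_eq_fld hY
    exact .snglQP2 hp hq (ih rfl rfl)
  | snglQP1 hp hq h ih =>
    intro a S T hX hY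
    subst hY
    obtain ⟨S0, rfl, rfl⟩ := Ty.repl_eq_fld hX
    exact .snglQP1 hp hq (ih rfl rfl)
  | allST _ _ => intro a S T hX hY; cases hX

/-- **Field inversion in invertible subtyping** (Lemma 4.8): if
`Γ ⊢## {a : S} <: {a : T}`, then `Γ ⊢## S <: T`. -/
theorem field_inversion_invertible (Γ : Env) (a : ℕ) (S T : Ty)
    (h : ISub Γ (.fld a S) (.fld a T)) : ISub Γ S T := by
  exact ISub.fld_inv h rfl rfl

end CDOT
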